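/- The category C is a ℂ-linear abelian category: it admits a ℂ-linear structure on its Hom-groups (with the imaginary unit i acting on Hom_C((V₁,ι₁),(V₂,ι₂)) by φ ↦ ι₂∘φ), its zero object is E(0_R), and for any two objects (V₁,ι₁), (V₂,ι₂) of C the pair (V₁ ⊕ V₂, ι₁ ⊕ ι₂) is a biproduct of (V₁,ι₁) and (V₂,ι₂) in C. -/

import Mathlib

set_option linter.unusedSectionVars false

open CategoryTheory CategoryTheory.Limits

universe v u

variable (R : Type u) [Category.{v} R] [Abelian R] [CategoryTheory.Linear ℝ R]

/-- Objects of the category `C`: pairs `(V, ι)` with `ι ∘ ι = -1`. -/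
structure CObj : Type max u v where
  V : R
  ι : V ⟶ V
  hι : ι ≫ ι = -𝟙 V

variable {R}

instance : Category.{v} (CObj R) where
  Hom W₁ W₂ := { φ : W₁.V ⟶ W₂.V // W₁.ι ≫ φ = φ ≫ W₂.ι }
  id W := ⟨𝟙 W.V, by simp⟩
  comp f g := ⟨f.1 ≫ g.1, by
    rw [← Category.assoc, f.2, Category.assoc, g.2, Category.assoc]⟩
  id_comp f := Subtype.ext (Category.id_comp f.1)
  comp_id f := Subtype.ext (Category.comp_id f.1)
  assoc f g h := Subtype.ext (Category.assoc f.1 g.1 h.1)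

@[ext]
lemma CObj.hom_ext {W₁ W₂ : CObj R} {f g : W₁ ⟶ W₂} (h : f.1 = g.1) : f = g :=
  Subtype.ext h

@[simp]
lemma CObj.id_coe (W : CObj R) : (𝟙 W : W ⟶ W).1 = 𝟙 W.V := rfl

@[simp]
lemma CObj.comp_coe {W₁ W₂ W₃ : CObj R} (f : W₁ ⟶ W₂) (g : W₂ ⟶ W₃) :
    (f ≫ g).1 = f.1 ≫ g.1 := rfl

instance (W₁ W₂ : CObj R) : Zero (W₁ ⟶ W₂) := ⟨⟨0, by simp⟩⟩

instance (W₁ W₂ : CObj R) : Add (W₁ ⟶ W₂) :=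
  ⟨fun f g => ⟨f.1 + g.1, by rw [Preadditive.comp_add, Preadditive.add_comp, f.2, g.2]⟩⟩

instance (W₁ W₂ : CObj R) : Neg (W₁ ⟶ W₂) :=
  ⟨fun f => ⟨-f.1, by rw [Preadditive.comp_neg, Preadditive.neg_comp, f.2]⟩⟩

instance (W₁ W₂ : CObj R) : Sub (W₁ ⟶ W₂) :=
  ⟨fun f g => ⟨f.1 - g.1, by rw [Preadditive.comp_sub, Preadditive.sub_comp, f.2, g.2]⟩⟩

instance (W₁ W₂ : CObj R) : SMul ℕ (W₁ ⟶ W₂) :=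
  ⟨fun n f => ⟨n • f.1, by rw [Linear.comp_smul, Linear.smul_comp, f.2]⟩⟩

instance (W₁ W₂ : CObj R) : SMul ℤ (W₁ ⟶ W₂) :=
  ⟨fun n f => ⟨n • f.1, by rw [Linear.comp_smul, Linear.smul_comp, f.2]⟩⟩

@[simp] lemma CObj.zero_coe (W₁ W₂ : CObj R) : (0 : W₁ ⟶ W₂).1 = 0 := rfl
@[simp] lemma CObj.add_coe {W₁ W₂ : CObj R} (f g : W₁ ⟶ W₂) : (f + g).1 = f.1 + g.1 := rfl
@[simp] lemma CObj.neg_coe {W₁ W₂ : CObj R} (f : W₁ ⟶ W₂) : (-f).1 = -f.1 := rfl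

instance (W₁ W₂ : CObj R) : AddCommGroup (W₁ ⟶ W₂) :=
  Function.Injective.addCommGroup (fun f : W₁ ⟶ W₂ => f.1) Subtype.val_injective
    rfl (fun _ _ => rfl) (fun _ => rfl) (fun _ _ => rfl) (fun _ _ => rfl) (fun _ _ => rfl)

instance : Preadditive (CObj R) where
  add_comp P Q S f f' g := by apply Subtype.ext; exact Preadditive.add_comp _ _ _ f.1 f'.1 g.1
  comp_add P Q S f g g' := by apply Subtype.ext; exact Preadditive.comp_add _ _ _ f.1 g.1 g'.1

variable (R)

/-- The conjugation functor `B : C → C`. -/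
def Bfunctor : CObj R ⥤ CObj R where
  obj W := ⟨W.V, -W.ι, by simp [W.hι]⟩
  map f := ⟨f.1, by simp [f.2]⟩
  map_id _ := rfl
  map_comp _ _ := rfl

/-- The forgetful functor `F : C → R`. -/
def Ffunctor : CObj R ⥤ R where
  obj W := W.V
  map f := f.1
  map_id _ := rfl
  map_comp _ _ := rfl

/-- The complexification functor `E : R → C`. -/
noncomputable def Efunctor : R ⥤ CObj R where
  obj V :=
    { V := V ⊞ V
      ι := -(biprod.snd ≫ biprod.inl) + biprod.fst ≫ biprod.inr
      hι := by ext <;> simp }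
  map φ := ⟨biprod.map φ φ, by ext <;> simp⟩
  map_id V := Subtype.ext (by ext <;> simp)
  map_comp f g := Subtype.ext (by ext <;> simp)

variable {R}

/-- The biproduct `(V₁ ⊕ V₂, ι₁ ⊕ ι₂)` of two objects of `C`. -/
noncomputable def csum (W₁ W₂ : CObj R) : CObj R where
  V := W₁.V ⊞ W₂.V
  ι := biprod.map W₁.ι W₂.ι
  hι := by ext <;> simp [W₁.hι, W₂.hι]

/-- Multiplication by `i` as a morphism in `C`. -/
def iMor (W : CObj R) : W ⟶ W := ⟨W.ι, rfl⟩

namespace CObj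

variable {W₁ W₂ W₃ : CObj R}

lemma iMor_comp_iMor (W : CObj R) : iMor W ≫ iMor W = -𝟙 W :=
  hom_ext W.hι

lemma comp_iMor_comp_iMor (φ : W₁ ⟶ W₂) : φ ≫ iMor W₂ ≫ iMor W₂ = -φ := by
  rw [iMor_comp_iMor, Preadditive.comp_neg, Category.comp_id]

lemma iMor_comp (g : W₂ ⟶ W₃) : iMor W₂ ≫ g = g ≫ iMor W₃ :=
  hom_ext g.2

lemma isZero_of_isZero_V {W : CObj R} (h : IsZero W.V) : IsZero W :=
  (IsZero.iff_id_eq_zero W).2 (hom_ext (h.eq_of_src _ _))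

end CObj

noncomputable def csumBicone (W₁ W₂ : CObj R) : BinaryBicone W₁ W₂ where
  pt := csum W₁ W₂
  fst := ⟨biprod.fst, by simp [csum]⟩
  snd := ⟨biprod.snd, by simp [csum]⟩
  inl := ⟨biprod.inl, by simp [csum]⟩
  inr := ⟨biprod.inr, by simp [csum]⟩
  inl_fst := CObj.hom_ext biprod.inl_fst
  inl_snd := CObj.hom_ext biprod.inl_snd
  inr_fst := CObj.hom_ext biprod.inr_fst
  inr_snd := CObj.hom_ext biprod.inr_snd

noncomputable def csumBiconeIsBilimit (W₁ W₂ : CObj R) : (csumBicone W₁ W₂).IsBilimit :=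
  isBinaryBilimitOfTotal _ (CObj.hom_ext biprod.total)

open scoped TensorProduct Quaternion

variable [EssentiallySmall.{v} R]

theorem statement0 :
    -- (1) `i` acts on `Hom_C(W₁, W₂)` by `φ ↦ ι₂ ∘ φ`: this is again a `C`-morphism…
    (∀ (W₁ W₂ : CObj R) (φ : W₁ ⟶ W₂), W₁.ι ≫ (φ.1 ≫ W₂.ι) = (φ.1 ≫ W₂.ι) ≫ W₂.ι) ∧
    -- …this action squares to `-1`…
    (∀ (W₁ W₂ : CObj R) (φ : W₁ ⟶ W₂), (φ.1 ≫ W₂.ι) ≫ W₂.ι = -φ.1) ∧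
    -- …it is additive and `ℝ`-linear (hence gives a `ℂ`-module structure on Hom-groups)…
    (∀ (W₁ W₂ : CObj R) (φ ψ : W₁ ⟶ W₂), (φ.1 + ψ.1) ≫ W₂.ι = φ.1 ≫ W₂.ι + ψ.1 ≫ W₂.ι) ∧
    (∀ (W₁ W₂ : CObj R) (r : ℝ) (φ : W₁ ⟶ W₂), (r • φ.1) ≫ W₂.ι = r • (φ.1 ≫ W₂.ι)) ∧
    -- …and composition is `ℂ`-bilinear for it (so `C` is a `ℂ`-linear category)…
    (∀ (W₁ W₂ W₃ : CObj R) (f : W₁ ⟶ W₂) (g : W₂ ⟶ W₃),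
        (f.1 ≫ W₂.ι) ≫ g.1 = (f.1 ≫ g.1) ≫ W₃.ι) ∧
    -- the zero object of `C` is `E(0_R)`…
    (∀ Z : R, IsZero Z → IsZero ((Efunctor R).obj Z)) ∧
    -- …and `(V₁ ⊞ V₂, ι₁ ⊕ ι₂)` is a biproduct of `(V₁, ι₁)` and `(V₂, ι₂)` in `C`.
    (∀ W₁ W₂ : CObj R, ∃ b : BinaryBicone W₁ W₂, b.pt = csum W₁ W₂ ∧ Nonempty b.IsBilimit) := by
  refine ⟨fun _ W₂ φ => (φ ≫ iMor W₂).2,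
    fun _ _ φ => by simpa [iMor] using congrArg Subtype.val (CObj.comp_iMor_comp_iMor φ),
    fun _ _ φ ψ => Preadditive.add_comp _ _ _ φ.1 ψ.1 _,
    fun _ _ r φ => Linear.smul_comp _ _ _ r φ.1 _,
    fun _ _ _ f g => by simpa [iMor] using congrArg (f.1 ≫ ·.1) (CObj.iMor_comp g),
    fun Z hZ => CObj.isZero_of_isZero_V ((biprod_isZero_iff Z Z).2 ⟨hZ, hZ⟩),
    fun W₁ W₂ => ⟨csumBicone W₁ W₂, rfl, ⟨csumBiconeIsBilimit W₁ W₂⟩⟩⟩
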